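/- arXiv:1212.4986 — 4 statements merged into one kernel-verified Lean document; each statement's English description precedes it below -/
import Mathlib

section
/- Let α ∈ (-1, 0] and β ≥ 0. Then there is a constant C (depending only on α and β) such that for every bounded interval I ⊂ (0,∞), ∫_I t^{α+β} dt ≤ C · (∫_I t^β dt) · inf_{t∈I} t^α. In fact one may take C = (β+1)/(α+β+1). -/
open MeasureTheory

/-- For `α ∈ (-1,0]` and `β ≥ 0`, for every bounded interval `I = (a,b) ⊂ (0,∞)`,
`∫_I t^(α+β) dt ≤ C (∫_I t^β dt) · inf_{t∈I} t^α` with `C = (β+1)/(α+β+1)`. -/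
theorem stmt1 (α β : ℝ) (hα : -1 < α) (hα0 : α ≤ 0) (hβ : 0 ≤ β) :
    ∀ a b : ℝ, 0 ≤ a → a < b →
      (∫ t in Set.Ioo a b, t ^ (α + β)) ≤
        ((β + 1) / (α + β + 1)) * (∫ t in Set.Ioo a b, t ^ β) *
          sInf ((fun t : ℝ => t ^ α) '' Set.Ioo a b) := by
  intro a b ha hab
  have hb : 0 < b := lt_of_le_of_lt ha hab
  have habp : -1 < α + β := by linarith
  have hsum : 0 < α + β + 1 := by linarith
  have hβ1 : 0 < β + 1 := by linarith
  -- rewrite set integrals as interval integrals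
  have e1 : (∫ t in Set.Ioo a b, t ^ (α + β)) =
      (b ^ (α + β + 1) - a ^ (α + β + 1)) / (α + β + 1) := by
    rw [← MeasureTheory.integral_Ioc_eq_integral_Ioo,
      ← intervalIntegral.integral_of_le hab.le]
    exact integral_rpow (Or.inl habp)
  have e2 : (∫ t in Set.Ioo a b, t ^ β) =
      (b ^ (β + 1) - a ^ (β + 1)) / (β + 1) := by
    rw [← MeasureTheory.integral_Ioc_eq_integral_Ioo,
      ← intervalIntegral.integral_of_le hab.le]
    exact integral_rpow (Or.inl (by linarith))
  -- bound on the infimum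
  have hinf : b ^ α ≤ sInf ((fun t : ℝ => t ^ α) '' Set.Ioo a b) := by
    apply le_csInf
    · exact (Set.nonempty_Ioo.mpr hab).image _
    · rintro x ⟨t, ⟨hat, htb⟩, rfl⟩
      exact Real.rpow_le_rpow_of_nonpos (lt_of_le_of_lt ha hat) htb.le hα0
  -- the main pointwise inequality
  have key : (b ^ (α + β + 1) - a ^ (α + β + 1)) / (α + β + 1) ≤
      ((β + 1) / (α + β + 1)) * ((b ^ (β + 1) - a ^ (β + 1)) / (β + 1)) * b ^ α := by
    have h2 : a ^ (β + 1) * b ^ α ≤ a ^ (α + β + 1) := by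
      rcases eq_or_lt_of_le ha with h | h
      · simp [← h, Real.zero_rpow hβ1.ne', Real.zero_rpow hsum.ne']
      · have : a ^ (α + β + 1) = a ^ α * a ^ (β + 1) := by
          rw [← Real.rpow_add h]; ring_nf
        rw [this]
        have := Real.rpow_le_rpow_of_nonpos h hab.le hα0
        nlinarith [Real.rpow_nonneg h.le (β + 1)]
    have h3 : b ^ (α + β + 1) = b ^ α * b ^ (β + 1) := by
      rw [← Real.rpow_add hb]; ring_nf
    rw [div_le_iff₀ hsum]
    have hrw : ((β + 1) / (α + β + 1)) * ((b ^ (β + 1) - a ^ (β + 1)) / (β + 1)) * b ^ α *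
        (α + β + 1) = (b ^ (β + 1) - a ^ (β + 1)) * b ^ α := by
      field_simp
    rw [hrw]
    nlinarith
  rw [e1, e2]
  calc (b ^ (α + β + 1) - a ^ (α + β + 1)) / (α + β + 1)
      ≤ ((β + 1) / (α + β + 1)) * ((b ^ (β + 1) - a ^ (β + 1)) / (β + 1)) * b ^ α := key
    _ ≤ _ := by
        apply mul_le_mul_of_nonneg_left hinf
        apply mul_nonneg (by positivity)
        have h4 : a ^ (β + 1) ≤ b ^ (β + 1) :=
          Real.rpow_le_rpow ha hab.le hβ1.le
        exact div_nonneg (by linarith) hβ1.le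
end

section
/- Let x be a d×d real matrix of rank k ≤ d-1, let v be a d×d real matrix with ‖v‖ ≤ 1 (Frobenius norm), and let σ₁(x),…,σ_d(x) denote the singular values of x. Then |det(x+v)| ≤ ‖v‖^{d-k} · Σ_{i=d-k}^{d} p_{d-i}(σ₁(x),…,σ_d(x)), where p_j denotes the j-th elementary symmetric polynomial in d variables. -/
open Matrix

/-- The Frobenius norm of a square real matrix. -/
noncomputable def frob {d : ℕ} (x : Matrix (Fin d) (Fin d) ℝ) : ℝ :=
  Real.sqrt (∑ i, ∑ j, (x i j) ^ 2)

/-- The `m`-th elementary symmetric polynomial in `d` variables, evaluated at `σ`. -/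
noncomputable def esymm (d m : ℕ) (σ : Fin d → ℝ) : ℝ :=
  ∑ S ∈ Finset.powersetCard m (Finset.univ : Finset (Fin d)), ∏ i ∈ S, σ i


-- squares sum equals trace
lemma sq_sum_eq_trace {n : Type*} [Fintype n] (B : Matrix n n ℝ) :
    ∑ i, ∑ j, B i j ^ 2 = (Bᵀ * B).trace := by
  rw [Matrix.trace]
  rw [Finset.sum_comm]
  congr 1; ext j
  simp [Matrix.mul_apply, Matrix.diag, sq]

-- Lemma A: |det B| ≤ frob^card
lemma abs_det_le {n : Type*} [Fintype n] [DecidableEq n] (B : Matrix n n ℝ) :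
    |B.det| ≤ Real.sqrt (∑ i, ∑ j, B i j ^ 2) ^ (Fintype.card n) := by
  have hpsd : (Bᵀ * B).PosSemidef := by
    have := Matrix.posSemidef_conjTranspose_mul_self B
    rwa [Matrix.conjTranspose_eq_transpose_of_trivial] at this
  have hherm := hpsd.1
  have hdet : B.det ^ 2 = ∏ i, hherm.eigenvalues i := by
    have := hherm.det_eq_prod_eigenvalues
    rw [Matrix.det_mul, Matrix.det_transpose] at this
    simpa [sq] using this
  have htr : ∑ i, ∑ j, B i j ^ 2 = ∑ i, hherm.eigenvalues i := by
    rw [sq_sum_eq_trace]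
    have hst := hherm.spectral_theorem
    calc (Bᵀ * B).trace
        = ((hherm.eigenvectorUnitary : Matrix n n ℝ) * Matrix.diagonal (RCLike.ofReal ∘ hherm.eigenvalues)
            * (star (hherm.eigenvectorUnitary : Matrix n n ℝ))).trace := by rw [Unitary.conjStarAlgAut_apply] at hst; rw [← hst]
      _ = (((star (hherm.eigenvectorUnitary : Matrix n n ℝ)) * (hherm.eigenvectorUnitary : Matrix n n ℝ)) *
            Matrix.diagonal (RCLike.ofReal ∘ hherm.eigenvalues)).trace := by
          rw [Matrix.trace_mul_cycle, Matrix.mul_assoc]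
      _ = (Matrix.diagonal (RCLike.ofReal ∘ hherm.eigenvalues)).trace := by
          rw [Matrix.UnitaryGroup.star_mul_self, Matrix.one_mul]
      _ = ∑ i, hherm.eigenvalues i := by simp [Matrix.trace_diagonal]
  have hnn : ∀ i, 0 ≤ hherm.eigenvalues i := hpsd.eigenvalues_nonneg
  have hS : 0 ≤ ∑ i, ∑ j, B i j ^ 2 := by positivity
  have hle : ∀ i, hherm.eigenvalues i ≤ ∑ i, ∑ j, B i j ^ 2 := by
    intro i
    rw [htr]
    exact Finset.single_le_sum (fun j _ => hnn j) (Finset.mem_univ i)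
  have h2 : B.det ^ 2 ≤ (∑ i, ∑ j, B i j ^ 2) ^ (Fintype.card n) := by
    rw [hdet]
    calc ∏ i, hherm.eigenvalues i ≤ ∏ _i : n, (∑ i, ∑ j, B i j ^ 2) :=
          Finset.prod_le_prod (fun i _ => hnn i) (fun i _ => hle i)
      _ = (∑ i, ∑ j, B i j ^ 2) ^ (Fintype.card n) := by
          rw [Finset.prod_const, Finset.card_univ]
  have hsq : (∑ i, ∑ j, B i j ^ 2) ^ (Fintype.card n)
      = (Real.sqrt (∑ i, ∑ j, B i j ^ 2) ^ (Fintype.card n)) ^ 2 := by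
    rw [← pow_mul, mul_comm, pow_mul, Real.sq_sqrt hS]
  have : |B.det| = Real.sqrt (B.det ^ 2) := (Real.sqrt_sq_eq_abs _).symm
  rw [this]
  calc Real.sqrt (B.det ^ 2) ≤ Real.sqrt ((∑ i, ∑ j, B i j ^ 2) ^ (Fintype.card n)) :=
        Real.sqrt_le_sqrt h2
    _ = Real.sqrt (∑ i, ∑ j, B i j ^ 2) ^ (Fintype.card n) := by
        rw [hsq, Real.sqrt_sq (by positivity)]


lemma sq_sum_eq_trace' {n : Type*} [Fintype n] (B : Matrix n n ℝ) :
    ∑ i, ∑ j, B i j ^ 2 = (Bᵀ * B).trace := by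
  rw [Matrix.trace, Finset.sum_comm]
  congr 1; ext j
  simp [Matrix.mul_apply, Matrix.diag, sq]

lemma frob_conj {n : Type*} [Fintype n] [DecidableEq n] (A B v : Matrix n n ℝ)
    (hA : Aᵀ * A = 1) (hB : B * Bᵀ = 1) :
    ∑ i, ∑ j, (A * v * B) i j ^ 2 = ∑ i, ∑ j, v i j ^ 2 := by
  rw [sq_sum_eq_trace', sq_sum_eq_trace']
  have : (A * v * B)ᵀ * (A * v * B) = Bᵀ * (vᵀ * v) * B := by
    simp only [Matrix.transpose_mul, Matrix.mul_assoc]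
    rw [← Matrix.mul_assoc Aᵀ A, hA, Matrix.one_mul]
  rw [this, Matrix.trace_mul_cycle, ← Matrix.mul_assoc, hB, Matrix.one_mul]


lemma exists_svd {d : ℕ} (x : Matrix (Fin d) (Fin d) ℝ) (h : (xᵀ * x).IsHermitian) :
    ∃ U Q : Matrix (Fin d) (Fin d) ℝ, Uᵀ * U = 1 ∧ Qᵀ * Q = 1 ∧ Q * Qᵀ = 1 ∧
      x = U * Matrix.diagonal (fun i => Real.sqrt (h.eigenvalues i)) * Qᵀ := by
  classical
  set lam := h.eigenvalues with hlam
  set σ : Fin d → ℝ := fun i => Real.sqrt (lam i) with hσ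
  have hpsd : (xᵀ * x).PosSemidef := by
    have := Matrix.posSemidef_conjTranspose_mul_self x
    rwa [Matrix.conjTranspose_eq_transpose_of_trivial] at this
  have hnn : ∀ i, 0 ≤ lam i := hpsd.eigenvalues_nonneg
  set Q : Matrix (Fin d) (Fin d) ℝ := (h.eigenvectorUnitary : Matrix (Fin d) (Fin d) ℝ) with hQ
  have hstarQ : star Q = Qᵀ := by
    rw [Matrix.star_eq_conjTranspose, Matrix.conjTranspose_eq_transpose_of_trivial]
  have hQ1 : Qᵀ * Q = 1 := by rw [← hstarQ]; exact Matrix.UnitaryGroup.star_mul_self _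
  have hQ2 : Q * Qᵀ = 1 := mul_eq_one_comm.mp hQ1
  have hspec : xᵀ * x = Q * Matrix.diagonal lam * Qᵀ := by
    have := h.spectral_theorem
    rw [Unitary.conjStarAlgAut_apply, hstarQ] at this
    convert this using 3
    all_goals rfl
  set y : Matrix (Fin d) (Fin d) ℝ := x * Q with hy
  have hgram : yᵀ * y = Matrix.diagonal lam := by
    calc yᵀ * y = Qᵀ * (xᵀ * x) * Q := by
          rw [hy, Matrix.transpose_mul]; simp only [Matrix.mul_assoc]
      _ = Qᵀ * Q * Matrix.diagonal lam * (Qᵀ * Q) := by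
          rw [hspec]; simp only [Matrix.mul_assoc]
      _ = Matrix.diagonal lam := by rw [hQ1]; simp
  have hcol : ∀ i j, (∑ p, y p i * y p j) = if i = j then lam i else 0 := by
    intro i j
    have := congrFun (congrFun hgram i) j
    simpa [Matrix.mul_apply, Matrix.transpose_apply, Matrix.diagonal_apply] using this
  -- columns as Euclidean vectors
  set cols : Fin d → EuclideanSpace ℝ (Fin d) := fun i => WithLp.toLp 2 (fun p => y p i) with hcols
  set vv : Fin d → EuclideanSpace ℝ (Fin d) := fun i => (σ i)⁻¹ • cols i with hvv
  have hinner : ∀ i j, (inner ℝ (cols i) (cols j) : ℝ) = if i = j then lam i else 0 := by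
    intro i j
    rw [← hcol i j]
    simp [PiLp.inner_apply, RCLike.inner_apply, hcols, mul_comm]
  have hortho : Orthonormal ℝ (Set.restrict {i | lam i ≠ 0} vv) := by
    rw [orthonormal_iff_ite]
    rintro ⟨i, hi⟩ ⟨j, hj⟩
    simp only [Set.restrict_apply, hvv]
    show inner ℝ ((σ i)⁻¹ • cols i) ((σ j)⁻¹ • cols j) = _
    rw [inner_smul_left, inner_smul_right, hinner]
    by_cases hij : i = j
    · subst hij
      have hpos : 0 < lam i := lt_of_le_of_ne (hnn i) (Ne.symm hi)
      have hσpos : 0 < σ i := Real.sqrt_pos.mpr hpos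
      have hss : σ i * σ i = lam i := Real.mul_self_sqrt hpos.le
      simp only [if_true, conj_trivial, map_inv₀]
      field_simp
      linarith [hss]
    · rw [if_neg hij, if_neg (by simpa [Subtype.ext_iff] using hij)]
      simp
  have hcard : Module.finrank ℝ (EuclideanSpace ℝ (Fin d)) = Fintype.card (Fin d) :=
    finrank_euclideanSpace
  obtain ⟨b, hb⟩ := hortho.exists_orthonormalBasis_extension_of_card_eq hcard
  set U : Matrix (Fin d) (Fin d) ℝ := Matrix.of (fun p i => b i p) with hU
  have hU1 : Uᵀ * U = 1 := by
    ext i j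
    have := (orthonormal_iff_ite.mp b.orthonormal) i j
    rw [Matrix.mul_apply, Matrix.one_apply]
    rw [← this]
    simp [PiLp.inner_apply, RCLike.inner_apply, hU, mul_comm]
  refine ⟨U, Q, hU1, hQ1, hQ2, ?_⟩
  have hyU : y = U * Matrix.diagonal σ := by
    ext p i
    rw [Matrix.mul_diagonal]
    by_cases hzero : lam i = 0
    · have hyz : y p i = 0 := by
        have hsum := hcol i i
        rw [if_pos rfl, hzero] at hsum
        have : ∀ q ∈ Finset.univ, 0 ≤ y q i * y q i := fun q _ => mul_self_nonneg _
        have := (Finset.sum_eq_zero_iff_of_nonneg this).mp hsum p (Finset.mem_univ p)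
        exact mul_self_eq_zero.mp this
      rw [hyz]
      have : σ i = 0 := by rw [hσ]; simp [hzero]
      rw [this, mul_zero]
    · have hbi : b i = vv i := hb i hzero
      have hσne : σ i ≠ 0 := by
        rw [hσ]
        exact ne_of_gt (Real.sqrt_pos.mpr (lt_of_le_of_ne (hnn i) (Ne.symm hzero)))
      have : U p i = (σ i)⁻¹ * y p i := by
        rw [hU]
        show b i p = (σ i)⁻¹ * y p i
        rw [hbi, hvv]
        rfl
      rw [this]
      field_simp
  calc x = x * (Q * Qᵀ) := by rw [hQ2, Matrix.mul_one]
    _ = y * Qᵀ := by rw [hy, Matrix.mul_assoc]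
    _ = U * Matrix.diagonal σ * Qᵀ := by rw [hyU]



lemma piecewise_det_bound {n : Type*} [Fintype n] [DecidableEq n] (σ : n → ℝ)
    (hσ : ∀ i, 0 ≤ σ i) (w : Matrix n n ℝ) (s : Finset n) :
    |Matrix.det (s.piecewise (Matrix.diagonal σ) w : Matrix n n ℝ)| ≤
      (∏ i ∈ s, σ i) * Real.sqrt (∑ i, ∑ j, w i j ^ 2) ^ (Fintype.card n - s.card) := by
  classical
  set M : Matrix n n ℝ := s.piecewise (Matrix.diagonal σ) w with hM
  set e : {i // i ∈ s} ⊕ {i // i ∉ s} ≃ n := Equiv.sumCompl (· ∈ s) with he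
  set A : Matrix {i // i ∈ s} {i // i ∈ s} ℝ := Matrix.diagonal (fun i => σ i.1) with hA
  set C : Matrix {i // i ∉ s} {i // i ∈ s} ℝ := Matrix.of (fun i j => w i.1 j.1) with hC
  set D : Matrix {i // i ∉ s} {i // i ∉ s} ℝ := Matrix.of (fun i j => w i.1 j.1) with hD
  have hsub : M.submatrix e e = Matrix.fromBlocks A 0 C D := by
    ext i j
    cases i with
    | inl i =>
      have hrow : M i.1 = Matrix.diagonal σ i.1 := Finset.piecewise_eq_of_mem _ _ _ i.2
      cases j with
      | inl j =>
        simp only [Matrix.submatrix_apply, he, Equiv.sumCompl_apply_inl,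
          Matrix.fromBlocks_apply₁₁]
        rw [show M i.1 j.1 = Matrix.diagonal σ i.1 j.1 from congrFun hrow j.1]
        simp only [hA, Matrix.diagonal_apply, Subtype.ext_iff]
      | inr j =>
        simp only [Matrix.submatrix_apply, he, Equiv.sumCompl_apply_inl,
          Equiv.sumCompl_apply_inr, Matrix.fromBlocks_apply₁₂]
        rw [show M i.1 j.1 = Matrix.diagonal σ i.1 j.1 from congrFun hrow j.1]
        have : i.1 ≠ j.1 := fun hij => j.2 (hij ▸ i.2)
        simp [Matrix.diagonal_apply_ne _ this]
    | inr i =>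
      have hrow : M i.1 = w i.1 := Finset.piecewise_eq_of_notMem _ _ _ i.2
      cases j with
      | inl j =>
        simp only [Matrix.submatrix_apply, he, Equiv.sumCompl_apply_inl,
          Equiv.sumCompl_apply_inr, Matrix.fromBlocks_apply₂₁]
        rw [show M i.1 j.1 = w i.1 j.1 from congrFun hrow j.1]
        rfl
      | inr j =>
        simp only [Matrix.submatrix_apply, he, Equiv.sumCompl_apply_inr,
          Matrix.fromBlocks_apply₂₂]
        rw [show M i.1 j.1 = w i.1 j.1 from congrFun hrow j.1]
        rfl
  have hdet : M.det = A.det * D.det := by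
    rw [← Matrix.det_submatrix_equiv_self e M, hsub, Matrix.det_fromBlocks_zero₁₂]
  have hdetA : A.det = ∏ i ∈ s, σ i := by
    rw [hA, Matrix.det_diagonal, Finset.prod_coe_sort]
  have hcard : Fintype.card {i // i ∉ s} = Fintype.card n - s.card := by
    rw [Fintype.card_subtype_compl, Fintype.card_coe]
  have hDle : |D.det| ≤ Real.sqrt (∑ i, ∑ j, w i j ^ 2) ^ (Fintype.card n - s.card) := by
    refine le_trans (abs_det_le D) ?_
    rw [hcard]
    refine pow_le_pow_left₀ (Real.sqrt_nonneg _) (Real.sqrt_le_sqrt ?_) _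
    calc ∑ i : {i // i ∉ s}, ∑ j : {i // i ∉ s}, D i j ^ 2
        = ∑ i ∈ sᶜ, ∑ j ∈ sᶜ, w i j ^ 2 := by
          rw [Finset.sum_subtype sᶜ (fun x => Finset.mem_compl) (fun i => ∑ j ∈ sᶜ, w i j ^ 2)]
          refine Finset.sum_congr rfl fun i _ => ?_
          rw [Finset.sum_subtype sᶜ (fun x => Finset.mem_compl) (fun j => w i.1 j ^ 2)]
          rfl
      _ ≤ ∑ i ∈ sᶜ, ∑ j, w i j ^ 2 := by
          refine Finset.sum_le_sum fun i _ => ?_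
          exact Finset.sum_le_sum_of_subset_of_nonneg (Finset.subset_univ _)
            (fun j _ _ => sq_nonneg _)
      _ ≤ ∑ i, ∑ j, w i j ^ 2 := by
          exact Finset.sum_le_sum_of_subset_of_nonneg (Finset.subset_univ _)
            (fun i _ _ => Finset.sum_nonneg fun j _ => sq_nonneg _)
  calc |M.det| = (∏ i ∈ s, σ i) * |D.det| := by
        rw [hdet, abs_mul, hdetA, abs_of_nonneg (Finset.prod_nonneg fun i _ => hσ i)]
    _ ≤ (∏ i ∈ s, σ i) * Real.sqrt (∑ i, ∑ j, w i j ^ 2) ^ (Fintype.card n - s.card) :=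
        mul_le_mul_of_nonneg_left hDle (Finset.prod_nonneg fun i _ => hσ i)

/-- If `rank x = k ≤ d-1` and `‖v‖ ≤ 1` (Frobenius), then
`|det(x+v)| ≤ ‖v‖^(d-k) · Σ_{i=d-k}^d p_{d-i}(σ₁(x),…,σ_d(x))`,
where `σᵢ(x) = √(eigenvalues of xᵀx)` are the singular values of `x`. -/
theorem stmt3 (d k : ℕ) (hd : 0 < d) (x v : Matrix (Fin d) (Fin d) ℝ)
    (h : (xᵀ * x).IsHermitian)
    (hk : x.rank = k) (hkd : k ≤ d - 1)
    (hv : frob v ≤ 1) :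
    |(x + v).det| ≤ frob v ^ (d - k) *
      ∑ i ∈ Finset.Icc (d - k) d,
        esymm d (d - i) (fun j => Real.sqrt (h.eigenvalues j)) := by
  classical
  obtain ⟨U, Q, hU1, hQ1, hQ2, hx⟩ := exists_svd x h
  set σ : Fin d → ℝ := fun i => Real.sqrt (h.eigenvalues i) with hσdef
  have hσ : ∀ i, 0 ≤ σ i := fun i => Real.sqrt_nonneg _
  have hU2 : U * Uᵀ = 1 := mul_eq_one_comm.mp hU1
  set w : Matrix (Fin d) (Fin d) ℝ := Uᵀ * v * Q with hw
  have hfw : Real.sqrt (∑ i, ∑ j, w i j ^ 2) = frob v := by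
    rw [frob]
    congr 1
    refine frob_conj Uᵀ Q v ?_ hQ2
    rw [Matrix.transpose_transpose]; exact hU2
  have hxv : x + v = U * (Matrix.diagonal σ + w) * Qᵀ := by
    rw [Matrix.mul_add, Matrix.add_mul, ← hx, hw]
    congr 1
    calc v = (U * Uᵀ) * v * (Q * Qᵀ) := by rw [hU2, hQ2, Matrix.one_mul, Matrix.mul_one]
      _ = U * (Uᵀ * v * Q) * Qᵀ := by simp only [Matrix.mul_assoc]
  have habsU : |U.det| = 1 := by
    have h2 : U.det * U.det = 1 := by
      nth_rewrite 1 [← Matrix.det_transpose U]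
      rw [← Matrix.det_mul, hU1, Matrix.det_one]
    rcases mul_self_eq_one_iff.mp h2 with h1 | h1 <;> rw [h1] <;> norm_num
  have habsQ : |Qᵀ.det| = 1 := by
    have h2 : Qᵀ.det * Qᵀ.det = 1 := by
      nth_rewrite 2 [Matrix.det_transpose Q]
      rw [← Matrix.det_mul, hQ1, Matrix.det_one]
    rcases mul_self_eq_one_iff.mp h2 with h1 | h1 <;> rw [h1] <;> norm_num
  have hdetabs : |(x + v).det| = |Matrix.det (Matrix.diagonal σ + w)| := by
    rw [hxv, Matrix.det_mul, Matrix.det_mul, abs_mul, abs_mul, habsU, habsQ, one_mul, mul_one]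
  have hexp : Matrix.det (Matrix.diagonal σ + w)
      = ∑ s : Finset (Fin d), Matrix.det (s.piecewise (Matrix.diagonal σ) w) :=
    Matrix.detRowAlternating.toMultilinearMap.map_add_univ (Matrix.diagonal σ) w
  have hF0 : 0 ≤ frob v := Real.sqrt_nonneg _
  have hbound : |Matrix.det (Matrix.diagonal σ + w)|
      ≤ ∑ s : Finset (Fin d), (∏ i ∈ s, σ i) * frob v ^ (d - s.card) := by
    rw [hexp]
    refine le_trans (Finset.abs_sum_le_sum_abs _ _) (Finset.sum_le_sum fun s _ => ?_)
    have hple := piecewise_det_bound σ hσ w s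
    rw [hfw] at hple
    simpa [Fintype.card_fin] using hple
  have hgroup : ∑ s : Finset (Fin d), (∏ i ∈ s, σ i) * frob v ^ (d - s.card)
      = ∑ m ∈ Finset.range (d + 1), esymm d m σ * frob v ^ (d - m) := by
    rw [← Finset.powerset_univ, Finset.sum_powerset]
    rw [show (Finset.univ : Finset (Fin d)).card = d by simp]
    refine Finset.sum_congr rfl fun m _ => ?_
    rw [esymm, Finset.sum_mul]
    refine Finset.sum_congr rfl fun s hs => ?_
    rw [(Finset.mem_powersetCard.mp hs).2]
  have hcount : Fintype.card {i // h.eigenvalues i ≠ 0} = k := by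
    rw [← h.rank_eq_card_non_zero_eigs, Matrix.rank_transpose_mul_self, hk]
  have hvanish : ∀ m, k < m → esymm d m σ = 0 := by
    intro m hm
    rw [esymm]
    refine Finset.sum_eq_zero fun S hS => ?_
    obtain ⟨hSsub, hScard⟩ := Finset.mem_powersetCard.mp hS
    have hex : ∃ i ∈ S, h.eigenvalues i = 0 := by
      by_contra hc
      push_neg at hc
      have hsub : S ⊆ Finset.univ.filter (fun i => h.eigenvalues i ≠ 0) :=
        fun i hi => Finset.mem_filter.mpr ⟨Finset.mem_univ i, hc i hi⟩
      have hle := Finset.card_le_card hsub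
      have hcf : (Finset.univ.filter (fun i => h.eigenvalues i ≠ 0)).card = k := by
        rw [← hcount, Fintype.card_subtype]
      omega
    obtain ⟨i, hiS, hi0⟩ := hex
    refine Finset.prod_eq_zero hiS ?_
    simp [hσdef, hi0]
  have hkd' : k < d := by omega
  have hsplit : ∑ m ∈ Finset.range (d + 1), esymm d m σ * frob v ^ (d - m)
      = ∑ m ∈ Finset.range (k + 1), esymm d m σ * frob v ^ (d - m) := by
    symm
    refine Finset.sum_subset ?_ ?_
    · intro m hm; simp only [Finset.mem_range] at hm ⊢; omega
    · intro m _ hm2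
      simp only [Finset.mem_range, not_lt] at hm2
      rw [hvanish m (by omega), zero_mul]
  have hesnn : ∀ m, 0 ≤ esymm d m σ := fun m =>
    Finset.sum_nonneg fun S _ => Finset.prod_nonneg fun i _ => hσ i
  have hmono : ∑ m ∈ Finset.range (k + 1), esymm d m σ * frob v ^ (d - m)
      ≤ frob v ^ (d - k) * ∑ m ∈ Finset.range (k + 1), esymm d m σ := by
    rw [Finset.mul_sum]
    refine Finset.sum_le_sum fun m hm => ?_
    simp only [Finset.mem_range] at hm
    rw [mul_comm (frob v ^ (d - k))]
    exact mul_le_mul_of_nonneg_left (pow_le_pow_of_le_one hF0 hv (by omega)) (hesnn m)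
  have hreindex : ∑ i ∈ Finset.Icc (d - k) d, esymm d (d - i) σ
      = ∑ m ∈ Finset.range (k + 1), esymm d m σ := by
    refine Finset.sum_nbij' (fun i => d - i) (fun m => d - m) ?_ ?_ ?_ ?_ ?_
    · intro a ha; simp only [Finset.mem_Icc] at ha; simp only [Finset.mem_range]; omega
    · intro a ha; simp only [Finset.mem_range] at ha; simp only [Finset.mem_Icc]; omega
    · intro a ha; simp only [Finset.mem_Icc] at ha; show d - (d - a) = a; omega
    · intro a ha; simp only [Finset.mem_range] at ha; show d - (d - a) = a; omega
    · intro a _; rfl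
  calc |(x + v).det| = |Matrix.det (Matrix.diagonal σ + w)| := hdetabs
    _ ≤ ∑ s : Finset (Fin d), (∏ i ∈ s, σ i) * frob v ^ (d - s.card) := hbound
    _ = ∑ m ∈ Finset.range (d + 1), esymm d m σ * frob v ^ (d - m) := hgroup
    _ = ∑ m ∈ Finset.range (k + 1), esymm d m σ * frob v ^ (d - m) := hsplit
    _ ≤ frob v ^ (d - k) * ∑ m ∈ Finset.range (k + 1), esymm d m σ := hmono
    _ = frob v ^ (d - k) * ∑ i ∈ Finset.Icc (d - k) d, esymm d (d - i) σ := by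
        rw [hreindex]
end

section
/- Let σ = (σ₁,…,σ_d) with σ₁ ≥ … ≥ σ_d ≥ 0 and r > 0. Set a = 18d. Then there exist σ' = (σ₁',…,σ_d') with σ₁' ≥ … ≥ σ_d' ≥ 0 and r' > 0 such that: (1) there is an index n ∈ {0,…,d} with σ_i' > a·r' for all i ≤ n and σ_i' = 0 for all i > n; (2) |σ - σ'| ≤ r' - r (Euclidean norm), hence B(Diag(σ), r) ⊂ B(Diag(σ'), r'); and (3) r' ≤ (1+a)^d · r. -/
open Matrix

private def toE {d : ℕ} (x : Matrix (Fin d) (Fin d) ℝ) : EuclideanSpace ℝ (Fin d × Fin d) :=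
  WithLp.toLp 2 (fun p : Fin d × Fin d => x p.1 p.2)

private lemma frob_eq_norm {d : ℕ} (x : Matrix (Fin d) (Fin d) ℝ) :
    frob x = ‖toE x‖ := by
  rw [EuclideanSpace.norm_eq, frob]
  congr 1
  rw [Fintype.sum_prod_type]
  simp [toE, sq_abs]

private lemma frob_add_le {d : ℕ} (A B : Matrix (Fin d) (Fin d) ℝ) :
    frob (A + B) ≤ frob A + frob B := by
  rw [frob_eq_norm, frob_eq_norm, frob_eq_norm]
  have : toE (A + B) = toE A + toE B := by ext p; simp [toE]
  rw [this]
  exact norm_add_le _ _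

private lemma frob_diag {d : ℕ} (v : Fin d → ℝ) :
    frob (Matrix.diagonal v) = Real.sqrt (∑ i, (v i) ^ 2) := by
  rw [frob]
  congr 1
  refine Finset.sum_congr rfl fun i _ => ?_
  rw [Finset.sum_eq_single i (fun j _ hj => by
    rw [Matrix.diagonal_apply_ne' _ hj]; ring) (by simp)]
  simp

/-- Given ordered nonnegative `σ` and `r > 0`, with `a = 18d`, there are `σ'` ordered
nonnegative, `r' > 0` and an index `n ≤ d` such that `σ'_i > a r'` for `i ≤ n`, `σ'_i = 0`
for `i > n`, `|σ - σ'| ≤ r' - r` (hence `B(Diag σ, r) ⊆ B(Diag σ', r')` in Frobenius norm),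
and `r' ≤ (1 + a)^d r`. -/
theorem stmt12 (d : ℕ) (hd : 0 < d) (σ : Fin d → ℝ)
    (hmono : ∀ i j : Fin d, i ≤ j → σ j ≤ σ i) (hpos : ∀ i, 0 ≤ σ i)
    (r : ℝ) (hr : 0 < r) :
    ∃ (σ' : Fin d → ℝ) (r' : ℝ) (n : ℕ), 0 < r' ∧ n ≤ d ∧
      (∀ i j : Fin d, i ≤ j → σ' j ≤ σ' i) ∧ (∀ i, 0 ≤ σ' i) ∧
      (∀ i : Fin d, (i : ℕ) < n → 18 * d * r' < σ' i) ∧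
      (∀ i : Fin d, n ≤ (i : ℕ) → σ' i = 0) ∧
      Real.sqrt (∑ i, (σ i - σ' i) ^ 2) ≤ r' - r ∧
      (∀ x : Matrix (Fin d) (Fin d) ℝ,
        frob (x - Matrix.diagonal σ) < r → frob (x - Matrix.diagonal σ') < r') ∧
      r' ≤ (1 + 18 * d) ^ d * r := by

  classical
  set A : ℝ := 18 * d with hA
  have hA0 : 0 ≤ A := by positivity
  have hA1 : (1:ℝ) ≤ 1 + A := by linarith
  have hPd : ∀ i : Fin d, d ≤ (i:ℕ) → σ i ≤ A * (1+A)^(d-1-(i:ℕ)) * r :=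
    fun i hi => absurd i.isLt (by omega)
  have hP : ∃ k, ∀ i : Fin d, k ≤ (i:ℕ) → σ i ≤ A * (1+A)^(d-1-(i:ℕ)) * r := ⟨d, hPd⟩
  set n := Nat.find hP with hn
  have hPn : ∀ i : Fin d, n ≤ (i:ℕ) → σ i ≤ A * (1+A)^(d-1-(i:ℕ)) * r := Nat.find_spec hP
  have hnd : n ≤ d := Nat.find_le hPd
  set r' : ℝ := (1+A)^(d-n) * r with hr'
  have hr'pos : 0 < r' := by positivity
  set σ' : Fin d → ℝ := fun i => if (i:ℕ) < n then σ i else 0 with hσ'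
  -- large entries
  have hbig : ∀ i : Fin d, (i:ℕ) < n → A * r' < σ i := by
    intro i hi
    have hn0 : 0 < n := by omega
    have hlt : n - 1 < n := by omega
    have hmin := Nat.find_min hP (by rw [← hn]; exact hlt)
    push_neg at hmin
    obtain ⟨j, hj1, hj2⟩ := hmin
    have hjn : (j:ℕ) = n - 1 := by
      by_contra hne
      exact absurd (hPn j (by omega)) (not_le.mpr hj2)
    have hij : σ j ≤ σ i := hmono i j (by rw [Fin.le_def]; omega)
    have hexp : d - 1 - (j:ℕ) = d - n := by omega
    rw [hexp] at hj2
    have : A * r' < σ j := by rw [hr']; linarith [hj2]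
    linarith
  -- reindexed entries
  set τ : ℕ → ℝ := fun k => if h : k < d then σ ⟨k, h⟩ else 0 with hτ
  have hτ0 : ∀ k ∈ Finset.Ico n d, 0 ≤ τ k := by
    intro k _
    simp only [hτ]
    split
    · exact hpos _
    · exact le_rfl
  have hsum : ∑ i : Fin d, (σ i - σ' i)^2 = ∑ k ∈ Finset.Ico n d, τ k ^ 2 := by
    have step1 : ∀ i : Fin d, (σ i - σ' i)^2 =
        (fun k => if h : k < d then (σ ⟨k,h⟩ - σ' ⟨k,h⟩)^2 else 0) (i:ℕ) := by
      intro i; simp [i.isLt]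
    rw [Finset.sum_congr rfl (fun i _ => step1 i),
      Fin.sum_univ_eq_sum_range (fun k => if h : k < d then (σ ⟨k,h⟩ - σ' ⟨k,h⟩)^2 else 0) d]
    have hsub : Finset.Ico n d ⊆ Finset.range d := by
      intro k hk; simp only [Finset.mem_Ico] at hk; simp [hk.2]
    have hzero : ∀ k ∈ Finset.range d, k ∉ Finset.Ico n d →
        (if h : k < d then (σ ⟨k,h⟩ - σ' ⟨k,h⟩)^2 else 0) = 0 := by
      intro k hk hnk
      simp only [Finset.mem_range] at hk
      simp only [Finset.mem_Ico] at hnk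
      have hkn : k < n := by omega
      rw [dif_pos hk]
      have : σ' ⟨k, hk⟩ = σ ⟨k, hk⟩ := by simp [hσ', hkn]
      rw [this]; ring
    rw [← Finset.sum_subset hsub hzero]
    refine Finset.sum_congr rfl fun k hk => ?_
    simp only [Finset.mem_Ico] at hk
    simp only [hτ]
    rw [dif_pos hk.2, dif_pos hk.2]
    have : σ' ⟨k, hk.2⟩ = 0 := by simp only [hσ']; rw [if_neg (by simp; omega)]
    rw [this]; ring
  have hgeom : ∑ k ∈ Finset.Ico n d, A * (1+A)^(d-1-k) * r = r' - r := by
    rw [Finset.sum_Ico_eq_sum_range]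
    have he : ∀ i ∈ Finset.range (d-n), A*(1+A)^(d-1-(n+i))*r
        = (fun j => A*(1+A)^j*r) ((d-n) - 1 - i) := by
      intro i hi; simp only [Finset.mem_range] at hi
      have : d-1-(n+i) = (d-n)-1-i := by omega
      simp only [this]
    rw [Finset.sum_congr rfl he, Finset.sum_range_reflect (fun j => A*(1+A)^j*r) (d-n)]
    have hg := geom_sum_mul (1+A) (d-n)
    have hsm : ∑ j ∈ Finset.range (d-n), A*(1+A)^j*r
        = (∑ j ∈ Finset.range (d-n), (1+A)^j) * (1+A-1) * r := by
      rw [Finset.sum_mul, Finset.sum_mul]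
      exact Finset.sum_congr rfl fun j _ => by ring
    rw [hsm, hg, hr']; ring
  have hτle : ∀ k ∈ Finset.Ico n d, τ k ≤ A * (1+A)^(d-1-k) * r := by
    intro k hk; simp only [Finset.mem_Ico] at hk
    simp only [hτ]; rw [dif_pos hk.2]
    exact hPn ⟨k, hk.2⟩ hk.1
  have hsqrt : Real.sqrt (∑ i : Fin d, (σ i - σ' i)^2) ≤ r' - r := by
    rw [hsum]
    calc Real.sqrt (∑ k ∈ Finset.Ico n d, τ k ^ 2)
        ≤ Real.sqrt ((∑ k ∈ Finset.Ico n d, τ k)^2) :=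
          Real.sqrt_le_sqrt (Finset.sum_sq_le_sq_sum_of_nonneg hτ0)
      _ = ∑ k ∈ Finset.Ico n d, τ k := Real.sqrt_sq (Finset.sum_nonneg hτ0)
      _ ≤ ∑ k ∈ Finset.Ico n d, A*(1+A)^(d-1-k)*r := Finset.sum_le_sum hτle
      _ = r' - r := hgeom
  refine ⟨σ', r', n, hr'pos, hnd, ?_, ?_, ?_, ?_, hsqrt, ?_, ?_⟩
  · intro i j hij
    simp only [hσ']
    by_cases hj : (j:ℕ) < n
    · rw [if_pos hj, if_pos (by rw [Fin.le_def] at hij; omega)]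
      exact hmono i j hij
    · rw [if_neg hj]
      split
      · exact hpos i
      · exact le_rfl
  · intro i; simp only [hσ']; split
    · exact hpos i
    · exact le_rfl
  · intro i hi
    have := hbig i hi
    simp only [hσ', if_pos hi]
    exact this
  · intro i hi; simp only [hσ']; rw [if_neg (by omega)]
  · intro x hx
    have hsplit : x - Matrix.diagonal σ' =
        (x - Matrix.diagonal σ) + (Matrix.diagonal σ - Matrix.diagonal σ') := by
      abel
    rw [hsplit]
    have h2 : frob (Matrix.diagonal σ - Matrix.diagonal σ') ≤ r' - r := by
      rw [Matrix.diagonal_sub, frob_diag]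
      exact hsqrt
    calc frob ((x - Matrix.diagonal σ) + (Matrix.diagonal σ - Matrix.diagonal σ'))
        ≤ frob (x - Matrix.diagonal σ) + frob (Matrix.diagonal σ - Matrix.diagonal σ') :=
          frob_add_le _ _
      _ < r + (r' - r) := add_lt_add_of_lt_of_le hx h2
      _ = r' := by ring
  · rw [hr']
    have h1 : (1+A)^(d-n) ≤ (1+A)^d := pow_le_pow_right₀ hA1 (by omega)
    exact mul_le_mul_of_nonneg_right h1 hr.le
end

section
/- Let Σ = Diag(σ) with σ₁ ≥ … ≥ σ_d ≥ 0 and r > 0 satisfy: there is n ∈ {0,…,d} with σ_i > 18d·r for i ≤ n and σ_i = 0 for i > n. Let x be a nonsingular matrix with ‖x - Σ‖ < r (Frobenius norm) and let x = QR be its QR-decomposition (Q ∈ O(d), R upper triangular with positive diagonal). Then there is a constant C₃ depending only on d such that ‖R - Σ‖ < C₃ r and |q_i - e_i| < C₃ r/σ_i for all i ≤ n, where q_i is the i-th column of Q and e_i the i-th standard unit vector. -/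
open Matrix

set_option maxHeartbeats 1000000

/-- There is a constant `C₃` depending only on `d` such that: if `Σ = Diag σ` with ordered
nonnegative `σ`, `r > 0`, and an index `n ≤ d` with `σ_i > 18 d r` for `i ≤ n` and
`σ_i = 0` for `i > n`, and if `x` is nonsingular with `‖x - Σ‖ < r` and `QR`-decomposition
`x = QR`, then `‖R - Σ‖ < C₃ r` and `|q_i - e_i| < C₃ r / σ_i` for all `i ≤ n`. -/
theorem stmt15 (d : ℕ) (hd : 0 < d) :
    ∃ C > (0 : ℝ), ∀ (σ : Fin d → ℝ) (r : ℝ) (n : ℕ)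
      (x Q R : Matrix (Fin d) (Fin d) ℝ),
      0 < r →
      (∀ i j : Fin d, i ≤ j → σ j ≤ σ i) → (∀ i, 0 ≤ σ i) →
      n ≤ d →
      (∀ i : Fin d, (i : ℕ) < n → 18 * d * r < σ i) →
      (∀ i : Fin d, n ≤ (i : ℕ) → σ i = 0) →
      IsUnit x.det →
      frob (x - Matrix.diagonal σ) < r →
      Qᵀ * Q = 1 →
      (∀ i j : Fin d, j < i → R i j = 0) →
      (∀ i : Fin d, 0 < R i i) →
      x = Q * R →
      frob (R - Matrix.diagonal σ) < C * r ∧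
        ∀ i : Fin d, (i : ℕ) < n →
          Real.sqrt (∑ l, (Q l i - if l = i then 1 else 0) ^ 2) < C * r / σ i := by
  refine ⟨10 * d ^ 2, by positivity, ?_⟩
  intro σ r n x Q R hr hσord hσ0 hnd hσbig hσzero _hxunit hfx hQtQ hRlow hRpos hxQR
  set E : Matrix (Fin d) (Fin d) ℝ := x - Matrix.diagonal σ with hEdef
  have hd1 : (1:ℝ) ≤ (d:ℝ) := by exact_mod_cast hd
  have hdpos : (0:ℝ) < (d:ℝ) := by linarith
  -- entries of x
  have hx : ∀ l j : Fin d, x l j = (if l = j then σ j else 0) + E l j := by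
    intro l j
    by_cases h : l = j <;> simp [hEdef, Matrix.sub_apply, Matrix.diagonal_apply, h]
  -- Frobenius bound on E
  have hEsum : ∑ i, ∑ j, (E i j) ^ 2 < r ^ 2 := by
    have h0 : (0:ℝ) ≤ ∑ i, ∑ j, (E i j) ^ 2 :=
      Finset.sum_nonneg fun i _ => Finset.sum_nonneg fun j _ => sq_nonneg _
    have h1 : Real.sqrt (∑ i, ∑ j, (E i j) ^ 2) < r := hfx
    nlinarith [Real.sq_sqrt h0, Real.sqrt_nonneg (∑ i, ∑ j, (E i j) ^ 2)]
  have hEcol : ∀ j, ∑ l, (E l j) ^ 2 ≤ r ^ 2 := by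
    intro j
    calc ∑ l, (E l j) ^ 2 ≤ ∑ l, ∑ j', (E l j') ^ 2 :=
          Finset.sum_le_sum fun l _ =>
            Finset.single_le_sum (fun j' _ => sq_nonneg (E l j')) (Finset.mem_univ j)
      _ ≤ r ^ 2 := hEsum.le
  have hEentry : ∀ a b : Fin d, |E a b| ≤ r := by
    intro a b
    have h1 : (E a b) ^ 2 ≤ r ^ 2 :=
      le_trans (Finset.single_le_sum (fun l _ => sq_nonneg (E l b)) (Finset.mem_univ a)) (hEcol b)
    nlinarith [abs_nonneg (E a b), sq_abs (E a b)]
  -- orthonormal columns of Q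
  have hQorth : ∀ a b : Fin d, ∑ l, Q l a * Q l b = if a = b then 1 else 0 := by
    intro a b
    have h := congrFun (congrFun hQtQ a) b
    simpa [Matrix.mul_apply, Matrix.transpose_apply, Matrix.one_apply] using h
  have hQcol : ∀ a : Fin d, ∑ l, Q l a * Q l a = 1 := by
    intro a; simpa using hQorth a a
  have hQ1 : ∀ a b : Fin d, |Q a b| ≤ 1 := by
    intro a b
    have h1 : Q a b * Q a b ≤ 1 := by
      rw [← hQcol b]
      exact Finset.single_le_sum (fun l _ => mul_self_nonneg (Q l b)) (Finset.mem_univ a)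
    nlinarith [abs_nonneg (Q a b), abs_mul_abs_self (Q a b)]
  -- R = Qᵀ x
  have hRdef : ∀ a b : Fin d, R a b = ∑ l, Q l a * x l b := by
    have hR : R = Qᵀ * x := by rw [hxQR, ← Matrix.mul_assoc, hQtQ, Matrix.one_mul]
    intro a b
    rw [hR]; simp [Matrix.mul_apply, Matrix.transpose_apply]
  -- Cauchy-Schwarz
  have hCS : ∀ a b : Fin d, |∑ l, Q l a * E l b| ≤ r := by
    intro a b
    have h2 := Finset.sum_mul_sq_le_sq_mul_sq Finset.univ (fun l => Q l a) (fun l => E l b)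
    have hq : ∑ l, (Q l a) ^ 2 = 1 := by
      simpa [sq] using hQcol a
    rw [hq, one_mul] at h2
    have h3 : (∑ l, Q l a * E l b) ^ 2 ≤ r ^ 2 := le_trans h2 (hEcol b)
    nlinarith [abs_nonneg (∑ l, Q l a * E l b), sq_abs (∑ l, Q l a * E l b)]
  have hRab : ∀ a b : Fin d, R a b = σ b * Q b a + ∑ l, Q l a * E l b := by
    intro a b
    rw [hRdef a b]
    simp_rw [hx, mul_add, Finset.sum_add_distrib, mul_ite, mul_zero]
    rw [Finset.sum_ite_eq' Finset.univ b (fun l => Q l a * σ b)]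
    simp [mul_comm]
  -- the Gram-Schmidt recursion
  have hw : ∀ i j : Fin d,
      R i i * Q j i = x j i - ∑ k ∈ Finset.univ.filter (fun k => k < i), R k i * Q j k := by
    intro i j
    have h1 : x j i = ∑ k, Q j k * R k i := by rw [hxQR]; simp [Matrix.mul_apply]
    rw [h1, ← Finset.sum_filter_add_sum_filter_not Finset.univ (fun k => k < i)]
    have h2 : ∑ k ∈ Finset.univ.filter (fun k => ¬ k < i), Q j k * R k i = Q j i * R i i := by
      apply Finset.sum_eq_single_of_mem i (by simp)
      intro k hk hki
      have hik : i < k := lt_of_le_of_ne (not_lt.mp (Finset.mem_filter.mp hk).2) (Ne.symm hki)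
      rw [hRlow k i hik, mul_zero]
    rw [h2]
    have h3 : ∑ k ∈ Finset.univ.filter (fun k => k < i), Q j k * R k i
        = ∑ k ∈ Finset.univ.filter (fun k => k < i), R k i * Q j k :=
      Finset.sum_congr rfl (fun k _ => mul_comm _ _)
    rw [h3]; ring
  -- MAIN induction
  have key : ∀ m : ℕ, ∀ i : Fin d, (i:ℕ) < m → (i:ℕ) < n →
      (∀ j, j ≠ i → σ i * |Q j i| ≤ 2 * r) ∧ σ i - 4 * r / 3 ≤ R i i * Q i i := by
    intro m
    induction m with
    | zero => intro i him; omega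
    | succ m ih =>
      intro i him hin
      have IH : ∀ k : Fin d, k < i → ∀ j, j ≠ k → σ k * |Q j k| ≤ 2 * r := by
        intro k hk
        have hkm : (k:ℕ) < m := lt_of_lt_of_le hk (Nat.lt_succ_iff.mp him)
        have hkn : (k:ℕ) < n := lt_trans hk hin
        exact (ih k hkm hkn).1
      -- step a : off-column R entries
      have hRk : ∀ k : Fin d, k < i → |R k i| ≤ 3 * r := by
        intro k hk
        have h1 := hRab k i
        have h2 : σ k * |Q i k| ≤ 2 * r := IH k hk i (fun h => absurd (h ▸ hk) (lt_irrefl _))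
        have h4 : σ i ≤ σ k := hσord k i (le_of_lt hk)
        have h5 := hCS k i
        have h6 : |R k i| ≤ σ i * |Q i k| + |∑ l, Q l k * E l i| := by
          rw [h1]
          refine (abs_add_le _ _).trans ?_
          rw [abs_mul, abs_of_nonneg (hσ0 i)]
        nlinarith [abs_nonneg (Q i k)]
      -- step c: partial sum bound
      have hsum : ∀ j : Fin d, (j = i ∨ i < j) →
          |∑ k ∈ Finset.univ.filter (fun k => k < i), R k i * Q j k| ≤ r / 3 := by
        intro j hj
        have hterm : ∀ k ∈ Finset.univ.filter (fun k => k < i), |R k i * Q j k| ≤ r / (3 * d) := by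
          intro k hkmem
          have hk : k < i := (Finset.mem_filter.mp hkmem).2
          have hjk : j ≠ k := by
            rcases hj with rfl | hj
            · exact fun h => absurd (h ▸ hk) (lt_irrefl _)
            · exact ne_of_gt (lt_trans hk hj)
          have h5 : σ k * |Q j k| ≤ 2 * r := IH k hk j hjk
          have h6 : 18 * d * r < σ k := hσbig k (lt_trans hk hin)
          have h7 : |R k i| ≤ 3 * r := hRk k hk
          have h8 : (d:ℝ) * |Q j k| ≤ 1 / 9 := by
            nlinarith [abs_nonneg (Q j k)]
          rw [abs_mul]
          have h9 : |R k i| * ((d:ℝ) * |Q j k|) ≤ 3 * r * (1/9) :=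
            mul_le_mul h7 h8 (by positivity) (by positivity)
          rw [le_div_iff₀ (by positivity : (0:ℝ) < 3 * (d:ℝ))]
          nlinarith [h9]
        calc |∑ k ∈ Finset.univ.filter (fun k => k < i), R k i * Q j k|
            ≤ ∑ k ∈ Finset.univ.filter (fun k => k < i), |R k i * Q j k| :=
              Finset.abs_sum_le_sum_abs _ _
          _ ≤ (Finset.univ.filter (fun k => k < i)).card • (r / (3 * d)) :=
              Finset.sum_le_card_nsmul _ _ _ hterm
          _ ≤ (d : ℝ) * (r / (3 * d)) := by
              rw [nsmul_eq_mul]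
              have hcard : ((Finset.univ.filter (fun k => k < i)).card : ℝ) ≤ (d:ℝ) := by
                have := Finset.card_filter_le Finset.univ (fun k : Fin d => k < i)
                have h9 : (Finset.univ : Finset (Fin d)).card = d := by simp
                exact_mod_cast h9 ▸ this
              have : (0:ℝ) ≤ r / (3 * d) := by positivity
              nlinarith
          _ = r / 3 := by field_simp
      -- step d : diagonal lower bound
      have hxii : x i i = σ i + E i i := by rw [hx]; simp
      have hdiag : σ i - 4 * r / 3 ≤ R i i * Q i i := by
        have h1 := hw i i
        have h2 := abs_le.mp (hsum i (Or.inl rfl))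
        have h3 := abs_le.mp (hEentry i i)
        rw [hxii] at h1
        linarith [h1.ge, h1.le]
      refine ⟨?_, hdiag⟩
      intro j hji
      rcases lt_or_gt_of_ne hji with hj | hj
      · -- j < i : use R i j = 0
        have h0 : R i j = 0 := hRlow i j hj
        have h1 := hRab i j
        have h3 : σ j * Q j i = -∑ l, Q l i * E l j := by rw [h1] at h0; linarith
        have h2 : σ j * |Q j i| ≤ r := by
          have h4 := hCS i j
          calc σ j * |Q j i| = |σ j * Q j i| := by rw [abs_mul, abs_of_nonneg (hσ0 j)]
            _ = |∑ l, Q l i * E l j| := by rw [h3, abs_neg]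
            _ ≤ r := h4
        have h4 : σ i ≤ σ j := hσord j i (le_of_lt hj)
        nlinarith [abs_nonneg (Q j i)]
      · -- i < j
        have h1 := hw i j
        have h2 := abs_le.mp (hsum j (Or.inr hj))
        have h3 : x j i = E j i := by rw [hx]; simp [ne_of_gt hj]
        have h4 : |R i i * Q j i| ≤ 4 * r / 3 := by
          rw [h1, h3]
          have := abs_le.mp (hEentry j i)
          rw [abs_le]; constructor <;> linarith
        have h5 : σ i - 4 * r / 3 ≤ R i i := by
          have h6 := hRpos i
          have h7 := (abs_le.mp (hQ1 i i)).2
          nlinarith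
        have h6 : 18 * d * r < σ i := hσbig i hin
        have h7 : R i i * |Q j i| ≤ 4 * r / 3 := by
          rwa [← abs_of_pos (hRpos i), ← abs_mul]
        have h8 : σ i ≤ 27 / 25 * R i i := by nlinarith
        have h9 : σ i * |Q j i| ≤ 27 / 25 * (R i i * |Q j i|) := by
          have := mul_le_mul_of_nonneg_right h8 (abs_nonneg (Q j i))
          linarith [this]
        nlinarith
  have keyP : ∀ i : Fin d, (i:ℕ) < n → ∀ j, j ≠ i → σ i * |Q j i| ≤ 2 * r :=
    fun i hin => (key n i hin hin).1
  have keyD : ∀ i : Fin d, (i:ℕ) < n → σ i - 4 * r / 3 ≤ R i i * Q i i :=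
    fun i hin => (key n i hin hin).2
  have hRiilb : ∀ i : Fin d, (i:ℕ) < n → σ i - 4 * r / 3 ≤ R i i := by
    intro i hin
    have h1 := keyD i hin
    have h2 := hRpos i
    have h3 := (abs_le.mp (hQ1 i i)).2
    nlinarith
  have hQiipos : ∀ i : Fin d, (i:ℕ) < n → 0 < Q i i := by
    intro i hin
    have h6 : 18 * d * r < σ i := hσbig i hin
    have h0 : (0:ℝ) < σ i - 4 * r / 3 := by nlinarith
    have h1 : 0 < R i i * Q i i := lt_of_lt_of_le h0 (keyD i hin)
    rcases mul_pos_iff.mp h1 with ⟨_, h2⟩ | ⟨h2, _⟩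
    · exact h2
    · linarith [hRpos i]
  have hRiiub : ∀ i : Fin d, R i i ≤ σ i + r := by
    intro i
    have h1 := hRab i i
    have h2 := (abs_le.mp (hCS i i)).2
    have h3 := (abs_le.mp (hQ1 i i)).2
    have h4 : σ i * Q i i ≤ σ i := by nlinarith [hσ0 i]
    linarith [h1.le]
  -- entrywise bound on R - Σ
  have hRentry : ∀ a b : Fin d, |R a b - Matrix.diagonal σ a b| ≤ 3 * r := by
    intro a b
    rcases lt_trichotomy b a with hba | rfl | hab
    · rw [hRlow a b hba, Matrix.diagonal_apply_ne σ (ne_of_gt hba)]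
      simp; positivity
    · rw [Matrix.diagonal_apply_eq]
      by_cases hn : (b:ℕ) < n
      · have h1 := hRiilb b hn
        have h2 := hRiiub b
        rw [abs_le]; constructor <;> linarith
      · have hσb : σ b = 0 := hσzero b (not_lt.mp hn)
        have h1 := hRab b b
        rw [hσb] at h1 ⊢
        rw [zero_mul, zero_add] at h1
        rw [sub_zero, h1]
        exact (hCS b b).trans (by linarith)
    · rw [Matrix.diagonal_apply_ne σ (ne_of_lt hab), sub_zero, hRab a b]
      by_cases hbn : (b:ℕ) < n
      · have han : (a:ℕ) < n := lt_trans hab hbn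
        have h1 : σ a * |Q b a| ≤ 2 * r := keyP a han b (ne_of_gt hab)
        have h2 : σ b ≤ σ a := hσord a b hab.le
        have h3 := hCS a b
        have h4 : |σ b * Q b a + ∑ l, Q l a * E l b| ≤ σ b * |Q b a| + r := by
          refine (abs_add_le _ _).trans ?_
          rw [abs_mul, abs_of_nonneg (hσ0 b)]
          linarith
        nlinarith [abs_nonneg (Q b a), hσ0 b]
      · have hσb : σ b = 0 := hσzero b (not_lt.mp hbn)
        rw [hσb, zero_mul, zero_add]
        linarith [hCS a b]
  constructor
  · -- Frobenius bound
    have hsum : ∑ i, ∑ j, ((R - Matrix.diagonal σ) i j) ^ 2 ≤ (3 * d * r) ^ 2 := by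
      have h1 : ∀ i j : Fin d, ((R - Matrix.diagonal σ) i j) ^ 2 ≤ (3 * r) ^ 2 := by
        intro i j
        have h2 := hRentry i j
        rw [Matrix.sub_apply]
        nlinarith [abs_nonneg (R i j - Matrix.diagonal σ i j),
          sq_abs (R i j - Matrix.diagonal σ i j)]
      calc ∑ i, ∑ j, ((R - Matrix.diagonal σ) i j) ^ 2
          ≤ ∑ i : Fin d, ∑ j : Fin d, (3 * r) ^ 2 :=
            Finset.sum_le_sum fun i _ => Finset.sum_le_sum fun j _ => h1 i j
        _ = (d:ℝ) * ((d:ℝ) * (3 * r) ^ 2) := by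
            simp [Finset.sum_const, Finset.card_univ]
        _ = (3 * d * r) ^ 2 := by ring
    have hle : frob (R - Matrix.diagonal σ) ≤ 3 * d * r := by
      rw [frob]
      calc Real.sqrt (∑ i, ∑ j, ((R - Matrix.diagonal σ) i j) ^ 2)
          ≤ Real.sqrt ((3 * d * r) ^ 2) := Real.sqrt_le_sqrt hsum
        _ = 3 * d * r := Real.sqrt_sq (by positivity)
    refine lt_of_le_of_lt hle ?_
    have hq : (0:ℝ) < 10 * (d:ℝ) ^ 2 - 3 * (d:ℝ) := by nlinarith [hd1]
    nlinarith [mul_pos hq hr]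
  · -- columns of Q
    intro i hin
    have hσpos : 0 < σ i := lt_trans (by positivity) (hσbig i hin)
    have hQii := hQiipos i hin
    have hQii1 := (abs_le.mp (hQ1 i i)).2
    -- expansion of the column difference
    have hexp : ∑ l, (Q l i - if l = i then 1 else 0) ^ 2 = 2 - 2 * Q i i := by
      have h1 : ∀ l : Fin d, (Q l i - if l = i then 1 else 0) ^ 2
          = Q l i * Q l i - 2 * (if l = i then Q l i else 0) + (if l = i then 1 else 0) := by
        intro l; by_cases h : l = i <;> simp [h] <;> ring
      rw [Finset.sum_congr rfl (fun l _ => h1 l), Finset.sum_add_distrib,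
        Finset.sum_sub_distrib, hQcol i, ← Finset.mul_sum,
        Finset.sum_ite_eq' Finset.univ i (fun l => Q l i),
        Finset.sum_ite_eq' Finset.univ i (fun _ => (1:ℝ))]
      simp only [Finset.mem_univ, if_true]
      ring
    have herase : ∑ l ∈ Finset.univ.erase i, Q l i * Q l i = 1 - Q i i * Q i i := by
      have h2 := Finset.sum_erase_add Finset.univ (fun l => Q l i * Q l i) (Finset.mem_univ i)
      have h3 := hQcol i
      linarith [h2.trans h3]
    have hterm : ∀ l ∈ Finset.univ.erase i, Q l i * Q l i ≤ (2 * (r / σ i)) ^ 2 := by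
      intro l hl
      have hlne : l ≠ i := (Finset.mem_erase.mp hl).1
      have h1 : σ i * |Q l i| ≤ 2 * r := keyP i hin l hlne
      have h2 : |Q l i| ≤ 2 * (r / σ i) := by
        rw [mul_div_assoc'] at *
        rw [le_div_iff₀ hσpos]
        linarith [mul_comm (|Q l i|) (σ i)]
      nlinarith [abs_nonneg (Q l i), abs_mul_abs_self (Q l i)]
    have hsum2 : ∑ l ∈ Finset.univ.erase i, Q l i * Q l i ≤ (d:ℝ) * (2 * (r / σ i)) ^ 2 := by
      calc ∑ l ∈ Finset.univ.erase i, Q l i * Q l i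
          ≤ (Finset.univ.erase i).card • ((2 * (r / σ i)) ^ 2) :=
            Finset.sum_le_card_nsmul _ _ _ hterm
        _ ≤ (d:ℝ) * (2 * (r / σ i)) ^ 2 := by
            rw [nsmul_eq_mul]
            have hcard : ((Finset.univ.erase i).card : ℝ) ≤ (d:ℝ) := by
              have h5 := Finset.card_le_card (Finset.erase_subset i (Finset.univ : Finset (Fin d)))
              have h6 : (Finset.univ : Finset (Fin d)).card = d := by simp
              exact_mod_cast h6 ▸ h5
            have h7 : (0:ℝ) ≤ (2 * (r / σ i)) ^ 2 := by positivity
            nlinarith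
    have htpos : 0 < r / σ i := div_pos hr hσpos
    have hfinal : ∑ l, (Q l i - if l = i then 1 else 0) ^ 2 ≤ (3 * d * (r / σ i)) ^ 2 := by
      rw [hexp]
      have h8 : 2 - 2 * Q i i ≤ 2 * (1 - Q i i * Q i i) := by nlinarith
      have h9 : 1 - Q i i * Q i i ≤ (d:ℝ) * (2 * (r / σ i)) ^ 2 := herase ▸ hsum2
      nlinarith [sq_nonneg (r / σ i)]
    have h10 : Real.sqrt (∑ l, (Q l i - if l = i then 1 else 0) ^ 2) ≤ 3 * d * (r / σ i) :=
      calc Real.sqrt (∑ l, (Q l i - if l = i then 1 else 0) ^ 2)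
          ≤ Real.sqrt ((3 * d * (r / σ i)) ^ 2) := Real.sqrt_le_sqrt hfinal
        _ = 3 * d * (r / σ i) := Real.sqrt_sq (by positivity)
    refine lt_of_le_of_lt h10 ?_
    rw [mul_div_assoc]
    have hq : (0:ℝ) < 10 * (d:ℝ) ^ 2 - 3 * (d:ℝ) := by nlinarith [hd1]
    nlinarith [mul_pos hq htpos]
end
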